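/- With A SPD, S SPD, B, C full row rank and 𝒫, ℬ as defined, every eigenvalue of 𝒫⁻¹ℬ is real and nonzero, and each eigenvalue equals either 1 or (y* B A⁻¹ Bᵀ y)/(y* S y) for some nonzero y ∈ null(C). -/

import Mathlib

open Matrix

noncomputable section

/-- 3×3 block matrix with blocks of sizes n, m, l. -/
def blk3 {n m l : ℕ} (M11 : Matrix (Fin n) (Fin n) ℝ) (M12 : Matrix (Fin n) (Fin m) ℝ)
    (M13 : Matrix (Fin n) (Fin l) ℝ) (M21 : Matrix (Fin m) (Fin n) ℝ)
    (M22 : Matrix (Fin m) (Fin m) ℝ) (M23 : Matrix (Fin m) (Fin l) ℝ)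
    (M31 : Matrix (Fin l) (Fin n) ℝ) (M32 : Matrix (Fin l) (Fin m) ℝ)
    (M33 : Matrix (Fin l) (Fin l) ℝ) :
    Matrix (Fin n ⊕ (Fin m ⊕ Fin l)) (Fin n ⊕ (Fin m ⊕ Fin l)) ℝ :=
  fromBlocks M11 (fromCols M12 M13) (fromRows M21 M31) (fromBlocks M22 M23 M32 M33)

/-- μ ∈ ℂ is an eigenvalue of the real matrix M (viewed over ℂ). -/
def IsEig {k : Type*} [Fintype k] (M : Matrix k k ℝ) (μ : ℂ) : Prop :=
  ∃ v : k → ℂ, v ≠ 0 ∧ (M.map (fun x : ℝ => (x : ℂ))) *ᵥ v = μ • v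

/-!
Write an eigenvector of `𝒫⁻¹ℬ` as `(x, y, z)`, so that `ℬ v = μ 𝒫 v`. The first and third block
rows of `ℬ` and `𝒫` coincide, so for `μ ≠ 1` they force `A x + Bᵀ y = 0` and `C y = 0`. Pairing
the second block row with `y` kills the `Cᵀ z` terms (as `C y = 0`) and, with `x = -A⁻¹ Bᵀ y`,
gives `y* B A⁻¹ Bᵀ y = μ y* S y`. Here `y ≠ 0`, since `y = 0` forces `x = 0`, then `Cᵀ z = 0`
and `z = 0`. Both quadratic forms are positive (`A`, `S` positive definite, `Bᵀ` injective), so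
`μ` is a positive real. `𝒫` is invertible because `det 𝒫 = det A · det S · det (C S⁻¹ Cᵀ)`.
-/

open Function Complex
open scoped ComplexOrder

lemma Sum.smul_elim {R M α β : Type*} [SMul R M] (c : R) (a : α → M) (b : β → M) :
    c • Sum.elim a b = Sum.elim (c • a) (c • b) :=
  Sum.comp_elim (c • ·) a b

lemma eq_zero_of_eq_smul {K V : Type*} [Field K] [AddCommGroup V] [Module K V] {μ : K}
    (hμ : μ ≠ 1) {w : V} (h : w = μ • w) : w = 0 := by
  have : (1 - μ) • w = 0 := by rw [sub_smul, one_smul, ← h, sub_self]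
  exact (smul_eq_zero.mp this).resolve_left (sub_ne_zero.mpr hμ.symm)

namespace Matrix

variable {l m n : Type*}

lemma mulVec_injective_of_rank_eq_card {K : Type*} [Field K] [Fintype n] {M : Matrix m n K}
    (h : M.rank = Fintype.card n) : Injective M.mulVec := by
  have h₁ := M.mulVecLin.finrank_range_add_finrank_ker
  rw [Module.finrank_fintype_fun_eq_card, ← Matrix.rank, h] at h₁
  have hker : LinearMap.ker M.mulVecLin = ⊥ := Submodule.finrank_eq_zero.mp (by omega)
  exact LinearMap.ker_eq_bot.mp hker

lemma mulVec_transpose_injective_of_rank_eq_card {K : Type*} [Field K] [Fintype m] [Fintype n]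
    {M : Matrix m n K} (h : M.rank = Fintype.card m) : Injective Mᵀ.mulVec :=
  mulVec_injective_of_rank_eq_card (by rw [rank_transpose, h])

lemma PosDef.mul_mul_transpose_of_rank_eq_card [Fintype m] [Fintype n] {M : Matrix n n ℝ}
    (hM : M.PosDef) {N : Matrix m n ℝ} (hN : N.rank = Fintype.card m) : (N * M * Nᵀ).PosDef :=
  hM.mul_mul_conjTranspose_same <| by
    simpa only [← mulVec_transpose] using mulVec_transpose_injective_of_rank_eq_card hN

lemma re_star_dotProduct [Fintype n] (z w : n → ℂ) :
    (star z ⬝ᵥ w).re = (re ∘ z) ⬝ᵥ (re ∘ w) + (im ∘ z) ⬝ᵥ (im ∘ w) := by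
  simp [dotProduct, Finset.sum_add_distrib]

lemma im_star_dotProduct [Fintype n] (z w : n → ℂ) :
    (star z ⬝ᵥ w).im = (re ∘ z) ⬝ᵥ (im ∘ w) - (im ∘ z) ⬝ᵥ (re ∘ w) := by
  simp only [dotProduct, ← Finset.sum_sub_distrib]
  simp [sub_eq_neg_add, mul_comm]

lemma re_map_ofReal_mulVec [Fintype n] (M : Matrix m n ℝ) (z : n → ℂ) :
    re ∘ (M.map ofReal *ᵥ z) = M *ᵥ (re ∘ z) := by
  ext i; simp [mulVec, dotProduct]

lemma im_map_ofReal_mulVec [Fintype n] (M : Matrix m n ℝ) (z : n → ℂ) :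
    im ∘ (M.map ofReal *ᵥ z) = M *ᵥ (im ∘ z) := by
  ext i; simp [mulVec, dotProduct]

lemma map_ofReal_mul [Fintype m] (M : Matrix l m ℝ) (N : Matrix m n ℝ) :
    (M * N).map ofReal = M.map ofReal * N.map ofReal :=
  Matrix.map_mul (f := ofRealHom)

lemma map_ofReal_neg (M : Matrix m n ℝ) : (-M).map ofReal = -M.map ofReal :=
  Matrix.map_neg _ ofReal_neg M

lemma map_ofReal_nonsing_inv [Fintype n] [DecidableEq n] {M : Matrix n n ℝ}
    (h : IsUnit M.det) : M⁻¹.map ofReal = (M.map ofReal)⁻¹ := by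
  refine (inv_eq_left_inv ?_).symm
  rw [← map_ofReal_mul, nonsing_inv_mul M h, Matrix.map_one _ ofReal_zero ofReal_one]

lemma transpose_map_ofReal (M : Matrix m n ℝ) : Mᵀ.map ofReal = (M.map ofReal)ᴴ := by
  ext i j; simp

lemma mulVec_map_ofReal_injective [Fintype n] {M : Matrix m n ℝ} (hM : Injective M.mulVec) :
    Injective (M.map ofReal).mulVec := by
  refine (injective_iff_map_eq_zero (M.map ofReal).mulVecLin).mpr fun z hz => ?_
  rw [mulVecLin_apply] at hz
  have hre : re ∘ z = 0 := hM <| by rw [← re_map_ofReal_mulVec, hz, mulVec_zero]; rfl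
  have him : im ∘ z = 0 := hM <| by rw [← im_map_ofReal_mulVec, hz, mulVec_zero]; rfl
  exact funext fun i => Complex.ext (congrFun hre i) (congrFun him i)

lemma mulVec_conjTranspose_map_ofReal_injective [Fintype m] [Fintype n] {M : Matrix m n ℝ}
    (h : M.rank = Fintype.card m) : Injective (M.map ofReal)ᴴ.mulVec := by
  rw [← transpose_map_ofReal]
  exact mulVec_map_ofReal_injective (mulVec_transpose_injective_of_rank_eq_card h)

lemma map_ofReal_mul_inv_mul_transpose [Fintype n] [DecidableEq n] {A : Matrix n n ℝ}
    (hA : IsUnit A.det) (B : Matrix m n ℝ) :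
    (B * A⁻¹ * Bᵀ).map ofReal = B.map ofReal * (A.map ofReal)⁻¹ * (B.map ofReal)ᴴ := by
  rw [map_ofReal_mul, map_ofReal_mul, map_ofReal_nonsing_inv hA, transpose_map_ofReal]

lemma PosDef.map_ofReal [Fintype n] {M : Matrix n n ℝ} (hM : M.PosDef) :
    (M.map ofReal).PosDef := by
  have hMt : Mᵀ = M := (conjTranspose_eq_transpose_of_trivial M).symm.trans hM.1
  refine PosDef.of_dotProduct_mulVec_pos ?_ fun z hz => Complex.pos_iff.mpr ⟨?_, ?_⟩
  · rw [IsHermitian, ← transpose_map_ofReal, hMt]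
  · have hform (x : n → ℝ) : 0 ≤ x ⬝ᵥ M *ᵥ x := hM.posSemidef.dotProduct_mulVec_nonneg x
    have hpos {x : n → ℝ} (hx : x ≠ 0) : 0 < x ⬝ᵥ M *ᵥ x := by
      simpa only [star_trivial] using hM.dotProduct_mulVec_pos hx
    rw [re_star_dotProduct, re_map_ofReal_mulVec, im_map_ofReal_mulVec]
    by_cases hre : re ∘ z = 0
    · have him : im ∘ z ≠ 0 := fun him =>
        hz (funext fun i => Complex.ext (congrFun hre i) (congrFun him i))
      linarith [hform (re ∘ z), hpos him]
    · linarith [hform (im ∘ z), hpos hre]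
  · rw [im_star_dotProduct, re_map_ofReal_mulVec, im_map_ofReal_mulVec, dotProduct_mulVec,
      ← mulVec_transpose, hMt, dotProduct_comm, sub_self]

end Matrix

theorem saddlePoint_eigen_rayleigh {l m n : Type*} [Fintype l] [Fintype m] [Fintype n]
    [DecidableEq n] {A : Matrix n n ℂ} {B : Matrix m n ℂ} {S : Matrix m m ℂ} {C : Matrix l m ℂ}
    (hA : A.PosDef) (hC : Injective Cᴴ.mulVec) {μ : ℂ} (hμ : μ ≠ 1)
    {x : n → ℂ} {y : m → ℂ} {z : l → ℂ} (hv : Sum.elim x (Sum.elim y z) ≠ 0)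
    (h₁ : A *ᵥ x + Bᴴ *ᵥ y = μ • (A *ᵥ x + Bᴴ *ᵥ y))
    (h₂ : -(B *ᵥ x) - Cᴴ *ᵥ z = μ • (S *ᵥ y - Cᴴ *ᵥ z))
    (h₃ : C *ᵥ y = μ • C *ᵥ y) :
    y ≠ 0 ∧ C *ᵥ y = 0 ∧ star y ⬝ᵥ (B * A⁻¹ * Bᴴ) *ᵥ y = μ * (star y ⬝ᵥ S *ᵥ y) := by
  have hBy : Bᴴ *ᵥ y = -(A *ᵥ x) := eq_neg_of_add_eq_zero_right (eq_zero_of_eq_smul hμ h₁)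
  have hCy : C *ᵥ y = 0 := eq_zero_of_eq_smul hμ h₃
  have hy : y ≠ 0 := by
    rintro rfl
    have hx : x = 0 := mulVec_injective_of_isUnit hA.isUnit (by simpa using hBy.symm)
    have hz : z = 0 := hC <| by
      simpa using eq_zero_of_eq_smul hμ (by simpa [hx] using h₂)
    exact hv (by simp [hx, hz])
  have hSchur : (B * A⁻¹ * Bᴴ) *ᵥ y = -(B *ᵥ x) := by
    rw [← mulVec_mulVec, ← mulVec_mulVec, hBy, mulVec_neg, mulVec_mulVec,
      nonsing_inv_mul _ ((isUnit_iff_isUnit_det A).mp hA.isUnit), one_mulVec, mulVec_neg]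
  have hyC : star y ⬝ᵥ Cᴴ *ᵥ z = 0 := by
    rw [dotProduct_mulVec, vecMul_conjTranspose, star_star, hCy, star_zero, zero_dotProduct]
  refine ⟨hy, hCy, ?_⟩
  have := congrArg (star y ⬝ᵥ ·) h₂
  simpa [hSchur, dotProduct_sub, hyC] using this

section Blocks

variable {n m l : ℕ}

lemma blk3_map_mulVec {R : Type*} [Semiring R] (f : ℝ → R)
    (M11 : Matrix (Fin n) (Fin n) ℝ) (M12 : Matrix (Fin n) (Fin m) ℝ)
    (M13 : Matrix (Fin n) (Fin l) ℝ) (M21 : Matrix (Fin m) (Fin n) ℝ)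
    (M22 : Matrix (Fin m) (Fin m) ℝ) (M23 : Matrix (Fin m) (Fin l) ℝ)
    (M31 : Matrix (Fin l) (Fin n) ℝ) (M32 : Matrix (Fin l) (Fin m) ℝ)
    (M33 : Matrix (Fin l) (Fin l) ℝ) (x : Fin n → R) (y : Fin m → R) (z : Fin l → R) :
    (blk3 M11 M12 M13 M21 M22 M23 M31 M32 M33).map f *ᵥ Sum.elim x (Sum.elim y z) =
      Sum.elim (M11.map f *ᵥ x + M12.map f *ᵥ y + M13.map f *ᵥ z)
        (Sum.elim (M21.map f *ᵥ x + M22.map f *ᵥ y + M23.map f *ᵥ z)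
          (M31.map f *ᵥ x + M32.map f *ᵥ y + M33.map f *ᵥ z)) := by
  simp only [blk3, fromBlocks_map, fromCols_map, fromRows_map, fromBlocks_mulVec,
    fromCols_mulVec_sumElim, fromRows_mulVec, Sum.elim_comp_inl, Sum.elim_comp_inr,
    ← Sum.elim_add_add, add_assoc]

lemma isUnit_det_blk3 {A : Matrix (Fin n) (Fin n) ℝ} {S : Matrix (Fin m) (Fin m) ℝ}
    (B : Matrix (Fin m) (Fin n) ℝ) {C : Matrix (Fin l) (Fin m) ℝ} (hA : A.PosDef) (hS : S.PosDef)
    (hC : C.rank = l) : IsUnit (blk3 A Bᵀ 0 0 S (-Cᵀ) 0 C 0).det := by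
  have hSchur : (C * S⁻¹ * Cᵀ).PosDef :=
    hS.inv.mul_mul_transpose_of_rank_eq_card (hC.trans (Fintype.card_fin l).symm)
  have : Invertible S := hS.isUnit.invertible
  have hdet : (blk3 A Bᵀ 0 0 S (-Cᵀ) 0 C 0).det = A.det * (S.det * (C * S⁻¹ * Cᵀ).det) := by
    rw [blk3, fromRows_zero, det_fromBlocks_zero₂₁, det_fromBlocks₁₁, invOf_eq_nonsing_inv]
    simp
  rw [hdet, isUnit_iff_ne_zero]
  exact (mul_pos hA.det_pos (mul_pos hS.det_pos hSchur.det_pos)).ne'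

end Blocks

lemma IsEig.exists_mulVec_eq_smul_mulVec {k : Type*} [Fintype k] [DecidableEq k]
    {P K : Matrix k k ℝ} {μ : ℂ} (h : IsEig (P⁻¹ * K) μ) (hP : IsUnit P.det) :
    ∃ v ≠ 0, K.map ofReal *ᵥ v = μ • P.map ofReal *ᵥ v := by
  obtain ⟨v, hv, hKv⟩ := h
  refine ⟨v, hv, ?_⟩
  have hK : K.map ofReal = P.map ofReal * (P⁻¹ * K).map ofReal := by
    rw [← map_ofReal_mul, mul_nonsing_inv_cancel_left _ _ hP]
  rw [hK, ← mulVec_mulVec, hKv, mulVec_smul]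

theorem stmt11 {n m l : ℕ} (A : Matrix (Fin n) (Fin n) ℝ) (B : Matrix (Fin m) (Fin n) ℝ)
    (S : Matrix (Fin m) (Fin m) ℝ) (C : Matrix (Fin l) (Fin m) ℝ)
    (hA : A.PosDef) (hS : S.PosDef) (hB : B.rank = m) (hC : C.rank = l) :
    ∀ μ : ℂ, IsEig ((blk3 A Bᵀ 0 0 S (-Cᵀ) 0 C 0)⁻¹ * blk3 A Bᵀ 0 (-B) 0 (-Cᵀ) 0 C 0) μ →
      μ.im = 0 ∧ μ ≠ 0 ∧
      (μ = 1 ∨ ∃ y : Fin m → ℂ, y ≠ 0 ∧ (C.map (fun x : ℝ => (x : ℂ))) *ᵥ y = 0 ∧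
        μ = (star y ⬝ᵥ ((B * A⁻¹ * Bᵀ).map (fun x : ℝ => (x : ℂ)) *ᵥ y)) /
            (star y ⬝ᵥ (S.map (fun x : ℝ => (x : ℂ)) *ᵥ y))) := by
  intro μ hμ
  obtain ⟨v, hv, hKv⟩ := hμ.exists_mulVec_eq_smul_mulVec (isUnit_det_blk3 B hA hS hC)
  rcases eq_or_ne μ 1 with rfl | hμ1
  · simp
  obtain ⟨x, w, rfl⟩ : ∃ x w, v = Sum.elim x w := ⟨_, _, (Sum.elim_comp_inl_inr v).symm⟩
  obtain ⟨y, z, rfl⟩ : ∃ y z, w = Sum.elim y z := ⟨_, _, (Sum.elim_comp_inl_inr w).symm⟩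
  simp only [blk3_map_mulVec, map_ofReal_neg, transpose_map_ofReal, Matrix.map_zero _ ofReal_zero,
    zero_mulVec, add_zero, zero_add, neg_mulVec, ← sub_eq_add_neg, Sum.smul_elim,
    Sum.elim_eq_iff] at hKv
  obtain ⟨h₁, h₂, h₃⟩ := hKv
  obtain ⟨hy, hCy, hq⟩ := saddlePoint_eigen_rayleigh hA.map_ofReal
    (mulVec_conjTranspose_map_ofReal_injective (hC.trans (Fintype.card_fin l).symm)) hμ1 hv
    h₁ h₂ h₃
  rw [← map_ofReal_mul_inv_mul_transpose hA.det_pos.ne'.isUnit] at hq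
  have hq_pos := ((hA.inv.mul_mul_transpose_of_rank_eq_card
    (hB.trans (Fintype.card_fin m).symm)).map_ofReal).dotProduct_mulVec_pos hy
  have hs_pos := hS.map_ofReal.dotProduct_mulVec_pos hy
  have hμq : μ = _ / _ := eq_div_of_mul_eq hs_pos.ne' hq.symm
  have hμ_pos : 0 < μ := hμq ▸ div_pos hq_pos hs_pos
  exact ⟨(Complex.pos_iff.mp hμ_pos).2.symm, hμ_pos.ne', Or.inr ⟨y, hy, hCy, hμq⟩⟩
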